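/- Let G be a complete multipartite graph whose vertex set is partitioned into k ≥ 2 parts, at least two of which have size at least 2. Then the maximal nongenerating sets of G are exactly the transversals of the parts: 𝒩(G) consists of the sets containing exactly one vertex from each part. -/
import Mathlib


open SimpleGraph

variable {V : Type*}

/-- `w` lies on a geodesic (shortest path) between `u` and `v` in `G`. -/
def OnGeodesic (G : SimpleGraph V) (u v w : V) : Prop :=
  ∃ p : G.Walk u v, p.IsPath ∧ p.length = G.dist u v ∧ w ∈ p.support

/-- A set of vertices is geodetically convex if it contains every vertex lying on a
geodesic between two of its elements. -/
def GeoConvex (G : SimpleGraph V) (S : Set V) : Prop :=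
  ∀ ⦃u⦄, u ∈ S → ∀ ⦃v⦄, v ∈ S → ∀ ⦃w⦄, OnGeodesic G u v w → w ∈ S

/-- The geodetic convex hull of a set of vertices: the smallest geodetically convex
set containing it. -/
def geoHull (G : SimpleGraph V) (S : Set V) : Set V :=
  ⋂₀ {K : Set V | S ⊆ K ∧ GeoConvex G K}

/-- A set of vertices is generating if its convex hull is the whole vertex set. -/
def GeoGenerates (G : SimpleGraph V) (S : Set V) : Prop :=
  geoHull G S = Set.univ

/-- A maximal nongenerating set: a nongenerating set not properly contained in any
nongenerating set.  The family of these is `𝒩(G)`. -/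
def MaxNongen (G : SimpleGraph V) (N : Set V) : Prop :=
  ¬ GeoGenerates G N ∧ ∀ M : Set V, ¬ GeoGenerates G M → N ⊆ M → N = M

/-- The Frattini subset `Φ(G)`: the intersection of all maximal nongenerating sets. -/
def geoFrattini (G : SimpleGraph V) : Set V :=
  ⋂₀ {N : Set V | MaxNongen G N}

/-- A vertex is simplicial if its neighbors induce a complete graph. -/
def Simplicial (G : SimpleGraph V) (v : V) : Prop :=
  ∀ ⦃u w : V⦄, G.Adj v u → G.Adj v w → u ≠ w → G.Adj u w

/-- A minimal generating set: a generating set no proper subset of which generates.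
The family of these is `𝒢(G)`. -/
def MinGen (G : SimpleGraph V) (L : Set V) : Prop :=
  GeoGenerates G L ∧ ∀ M : Set V, GeoGenerates G M → M ⊆ L → M = L

section Helpers

variable {ι : Type*} {W : ι → Type*}

lemma cmp_adj {u v : Σ i, W i} :
    (completeMultipartiteGraph W).Adj u v ↔ u.1 ≠ v.1 := Iff.rfl

lemma subset_geoHull {G : SimpleGraph V} {S : Set V} : S ⊆ geoHull G S :=
  fun _ hx => Set.mem_sInter.2 fun _ hK => hK.1 hx

lemma geoConvex_geoHull {G : SimpleGraph V} {S : Set V} : GeoConvex G (geoHull G S) :=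
  fun _ hu _ hv _ hw => Set.mem_sInter.2 fun K hK =>
    hK.2 (Set.mem_sInter.1 hu K hK) (Set.mem_sInter.1 hv K hK) hw

lemma onGeodesic_mid {i j : ι} (hij : i ≠ j) {a b : W i} (hab : a ≠ b) (c : W j) :
    OnGeodesic (completeMultipartiteGraph W) ⟨i, a⟩ ⟨i, b⟩ ⟨j, c⟩ := by
  have h1 : (completeMultipartiteGraph W).Adj ⟨i, a⟩ ⟨j, c⟩ := hij
  have h2 : (completeMultipartiteGraph W).Adj ⟨j, c⟩ ⟨i, b⟩ := hij.symm
  have hne1 : (⟨i, a⟩ : Σ i, W i) ≠ ⟨j, c⟩ := fun h => hij (congrArg Sigma.fst h)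
  have hne2 : (⟨j, c⟩ : Σ i, W i) ≠ ⟨i, b⟩ := fun h => hij.symm (congrArg Sigma.fst h)
  have hne3 : (⟨i, a⟩ : Σ i, W i) ≠ ⟨i, b⟩ := by simp [hab]
  refine ⟨Walk.cons h1 (Walk.cons h2 Walk.nil), ?_, ?_, by simp⟩
  · simp [Walk.isPath_def, hne1, hne2, hne3]
  · have hle : (completeMultipartiteGraph W).dist ⟨i, a⟩ ⟨i, b⟩ ≤ 2 :=
      dist_le (Walk.cons h1 (Walk.cons h2 Walk.nil))
    have hreach : (completeMultipartiteGraph W).Reachable ⟨i, a⟩ ⟨i, b⟩ :=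
      ⟨Walk.cons h1 (Walk.cons h2 Walk.nil)⟩
    have h0 : (completeMultipartiteGraph W).dist ⟨i, a⟩ ⟨i, b⟩ ≠ 0 := fun h =>
      hne3 (hreach.dist_eq_zero_iff.mp h)
    have h1' : (completeMultipartiteGraph W).dist ⟨i, a⟩ ⟨i, b⟩ ≠ 1 := fun h =>
      (dist_eq_one_iff_adj.mp h : i ≠ i) rfl
    simp only [Walk.length_cons, Walk.length_nil]
    omega

/-- A set with at most one vertex in each part is geodetically convex. -/
lemma geoConvex_of_partial {S : Set (Σ i, W i)}
    (hS : ∀ (i : ι) (a b : W i), (⟨i, a⟩ : Σ i, W i) ∈ S → (⟨i, b⟩ : Σ i, W i) ∈ S → a = b) :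
    GeoConvex (completeMultipartiteGraph W) S := by
  rintro ⟨i, a⟩ hu ⟨j, b⟩ hv w ⟨p, _hp, hlen, hw⟩
  by_cases hij : i = j
  · subst hij
    have hab : a = b := hS i a b hu hv
    subst hab
    rw [dist_self] at hlen
    cases p with
    | nil =>
      have hwe := hw
      simp only [Walk.support_nil, List.mem_singleton] at hwe
      exact hwe ▸ hu
    | cons h q => simp at hlen
  · have hadj : (completeMultipartiteGraph W).Adj ⟨i, a⟩ ⟨j, b⟩ := hij
    rw [dist_eq_one_iff_adj.mpr hadj] at hlen
    cases p with
    | nil => simp at hlen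
    | cons h q =>
      cases q with
      | nil =>
        simp only [Walk.support_cons, Walk.support_nil, List.mem_cons,
          List.mem_singleton, List.not_mem_nil, or_false] at hw
        rcases hw with rfl | rfl
        · exact hu
        · exact hv
      | cons h' q' => simp at hlen

lemma not_generates_of_partial [∀ i, Fintype (W i)]
    (hlarge : ∃ i j : ι, i ≠ j ∧ 2 ≤ Fintype.card (W i) ∧ 2 ≤ Fintype.card (W j))
    {S : Set (Σ i, W i)}
    (hS : ∀ (i : ι) (a b : W i), (⟨i, a⟩ : Σ i, W i) ∈ S → (⟨i, b⟩ : Σ i, W i) ∈ S → a = b) :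
    ¬ GeoGenerates (completeMultipartiteGraph W) S := by
  intro h
  have hsub : geoHull (completeMultipartiteGraph W) S ⊆ S :=
    Set.sInter_subset_of_mem ⟨Set.Subset.rfl, geoConvex_of_partial hS⟩
  rw [h] at hsub
  obtain ⟨i, _j, _hij, hi, _hj⟩ := hlarge
  obtain ⟨a, b, hab⟩ := Fintype.exists_pair_of_one_lt_card (by omega : 1 < Fintype.card (W i))
  exact hab (hS i a b (hsub trivial) (hsub trivial))

lemma generates_of_two [∀ i, Fintype (W i)]
    (hlarge : ∃ i j : ι, i ≠ j ∧ 2 ≤ Fintype.card (W i) ∧ 2 ≤ Fintype.card (W j))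
    {S : Set (Σ i, W i)} {i : ι} {a b : W i} (hab : a ≠ b)
    (ha : (⟨i, a⟩ : Σ i, W i) ∈ S) (hb : (⟨i, b⟩ : Σ i, W i) ∈ S) :
    GeoGenerates (completeMultipartiteGraph W) S := by
  set H := geoHull (completeMultipartiteGraph W) S with hH
  have hSH : S ⊆ H := subset_geoHull
  have hconv : GeoConvex (completeMultipartiteGraph W) H := geoConvex_geoHull
  have step : ∀ (m : ι) (x y : W m), x ≠ y → (⟨m, x⟩ : Σ i, W i) ∈ H →
      (⟨m, y⟩ : Σ i, W i) ∈ H → ∀ (j : ι), j ≠ m → ∀ c : W j, (⟨j, c⟩ : Σ i, W i) ∈ H :=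
    fun m x y hxy hx hy j hj c => hconv hx hy (onGeodesic_mid (fun h => hj h.symm) hxy c)
  obtain ⟨i1, i2, h12, hc1, hc2⟩ := hlarge
  have key : ∃ j0, j0 ≠ i ∧ 2 ≤ Fintype.card (W j0) := by
    by_cases h : i1 = i
    · exact ⟨i2, fun he => h12 (h.trans he.symm), hc2⟩
    · exact ⟨i1, h, hc1⟩
  obtain ⟨j0, hj0, hcard⟩ := key
  obtain ⟨c, d, hcd⟩ := Fintype.exists_pair_of_one_lt_card (by omega : 1 < Fintype.card (W j0))
  have hc' : (⟨j0, c⟩ : Σ i, W i) ∈ H := step i a b hab (hSH ha) (hSH hb) j0 hj0 c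
  have hd' : (⟨j0, d⟩ : Σ i, W i) ∈ H := step i a b hab (hSH ha) (hSH hb) j0 hj0 d
  show H = Set.univ
  apply Set.eq_univ_of_forall
  rintro ⟨m, x⟩
  by_cases hm : m = j0
  · subst hm; exact step i a b hab (hSH ha) (hSH hb) m hj0 x
  · exact step j0 c d hcd hc' hd' m hm x

end Helpers

/-- For a complete multipartite graph with `k ≥ 2` parts, at least two of
which have size at least `2`, the maximal nongenerating sets are exactly the
transversals: the sets containing exactly one vertex from each part. -/
theorem maxNongen_completeMultipartite_iff {ι : Type*} [Fintype ι] (W : ι → Type*)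
    [∀ i, Fintype (W i)] [∀ i, Nonempty (W i)]
    (hk : 2 ≤ Fintype.card ι)
    (hlarge : ∃ i j : ι, i ≠ j ∧ 2 ≤ Fintype.card (W i) ∧ 2 ≤ Fintype.card (W j))
    (N : Set (Σ i, W i)) :
    MaxNongen (completeMultipartiteGraph W) N ↔
      ∀ i : ι, ∃! w : W i, (⟨i, w⟩ : Σ i, W i) ∈ N := by
  constructor
  · rintro ⟨hng, hmax⟩ i
    have hpart : ∀ (j : ι) (a b : W j),
        (⟨j, a⟩ : Σ i, W i) ∈ N → (⟨j, b⟩ : Σ i, W i) ∈ N → a = b := by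
      intro j a b ha hb
      by_contra hab
      exact hng (generates_of_two hlarge hab ha hb)
    have hex : ∃ w : W i, (⟨i, w⟩ : Σ i, W i) ∈ N := by
      by_contra h
      push_neg at h
      set w0 := Classical.arbitrary (W i) with hw0
      set N' := insert (⟨i, w0⟩ : Σ i, W i) N with hN'
      have hpart' : ∀ (j : ι) (a b : W j),
          (⟨j, a⟩ : Σ i, W i) ∈ N' → (⟨j, b⟩ : Σ i, W i) ∈ N' → a = b := by
        intro j a b ha hb
        rcases ha with ha | ha <;> rcases hb with hb | hb
        · simpa using ha.trans hb.symm
        · exfalso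
          have hji : j = i := congrArg Sigma.fst ha
          subst hji
          have : b = w0 := by
            by_contra hbw
            exact h b hb
          exact h b hb
        · exfalso
          have hji : j = i := congrArg Sigma.fst hb
          subst hji
          exact h a ha
        · exact hpart j a b ha hb
      have hng' : ¬ GeoGenerates (completeMultipartiteGraph W) N' :=
        not_generates_of_partial hlarge hpart'
      have := hmax N' hng' (Set.subset_insert _ _)
      have : (⟨i, w0⟩ : Σ i, W i) ∈ N := this ▸ Set.mem_insert _ _
      exact h w0 this
    obtain ⟨w, hw⟩ := hex
    exact ⟨w, hw, fun y hy => hpart i y w hy hw⟩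
  · intro h
    have hpart : ∀ (j : ι) (a b : W j),
        (⟨j, a⟩ : Σ i, W i) ∈ N → (⟨j, b⟩ : Σ i, W i) ∈ N → a = b := by
      intro j a b ha hb
      obtain ⟨w, _hw, hu⟩ := h j
      exact (hu a ha).trans (hu b hb).symm
    refine ⟨not_generates_of_partial hlarge hpart, ?_⟩
    intro M hM hNM
    refine Set.Subset.antisymm hNM ?_
    rintro ⟨j, c⟩ hc
    obtain ⟨w, hw, _hu⟩ := h j
    have hMpart : ∀ (m : ι) (a b : W m),
        (⟨m, a⟩ : Σ i, W i) ∈ M → (⟨m, b⟩ : Σ i, W i) ∈ M → a = b := by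
      intro m a b ha hb
      by_contra hab
      exact hM (generates_of_two hlarge hab ha hb)
    have : c = w := hMpart j c w hc (hNM hw)
    exact this ▸ hw
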